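/- The subspace 𝔰𝔲_{𝔩0}(2^n) = span{c⊗σz : c ∈ su(2^{n−1})} and 𝔰𝔲_{𝔩1}(2^n) = span{d⊗I, i·z_n : d ∈ su(2^{n−1})} satisfy: 𝔰𝔲_{𝔩1} is a subalgebra, [𝔰𝔲_{𝔩0}, 𝔰𝔲_{𝔩1}] ⊆ 𝔰𝔲_{𝔩0}, and [𝔰𝔲_{𝔩0}, 𝔰𝔲_{𝔩0}] ⊆ 𝔰𝔲_{𝔩1}. -/

import Mathlib

/-!
Kronecker products multiply factorwise, so for commuting `X, Y` the commutator of `A ⊗ X` and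
`B ⊗ Y` is `[A, B] ⊗ XY`. All generators have second factor `1` or `σz`, and `σz² = 1`, so the
bracket of two generators is a generator with first factor `[c, d] ∈ su`, except for brackets
with `i·z_n = 1 ⊗ iσz`, which commutes with every generator. Bilinearity of the commutator
passes from generators to spans.
-/

open Matrix Complex
open scoped Kronecker

/-- The 2×2 Pauli matrices. -/
noncomputable def σx : Matrix (Fin 2) (Fin 2) ℂ := !![0, 1; 1, 0]
noncomputable def σy : Matrix (Fin 2) (Fin 2) ℂ := !![0, -I; I, 0]
noncomputable def σz : Matrix (Fin 2) (Fin 2) ℂ := !![1, 0; 0, -1]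

/-- `su ι`: traceless skew-Hermitian complex matrices indexed by `ι`. -/
def su (ι : Type*) [Fintype ι] [DecidableEq ι] : Set (Matrix ι ι ℂ) :=
  {A | Aᴴ = -A ∧ A.trace = 0}

theorem mul_sub_mul_mem_of_mem_span {R A : Type*} [CommRing R] [Ring A] [Algebra R A]
    {s t : Set A} {p : Submodule R A} (h : ∀ a ∈ s, ∀ b ∈ t, a * b - b * a ∈ p)
    {x y : A} (hx : x ∈ Submodule.span R s) (hy : y ∈ Submodule.span R t) :
    x * y - y * x ∈ p := by
  have hle : Submodule.map₂ (LinearMap.mul R A - (LinearMap.mul R A).flip)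
      (Submodule.span R s) (Submodule.span R t) ≤ p := by
    rw [Submodule.map₂_span_span, Submodule.span_le]
    rintro _ ⟨a, ha, b, hb, rfl⟩
    exact h a ha b hb
  exact hle (Submodule.apply_mem_map₂ _ hx hy)

theorem su.mul_sub_mul_mem {ι : Type*} [Fintype ι] [DecidableEq ι] {c d : Matrix ι ι ℂ}
    (hc : c ∈ su ι) (hd : d ∈ su ι) : c * d - d * c ∈ su ι := by
  obtain ⟨hc, -⟩ := hc
  obtain ⟨hd, -⟩ := hd
  refine ⟨?_, by rw [trace_sub, trace_mul_comm, sub_self]⟩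
  simp only [conjTranspose_sub, conjTranspose_mul, hc, hd, neg_mul_neg, neg_sub]

section Kronecker

variable {α l n : Type*}

theorem Matrix.sub_kronecker [NonUnitalNonAssocRing α] (A B : Matrix l l α) (C : Matrix n n α) :
    (A - B) ⊗ₖ C = A ⊗ₖ C - B ⊗ₖ C := by
  ext ⟨i, j⟩ ⟨i', j'⟩
  simp [kroneckerMap_apply, sub_mul]

theorem Matrix.kronecker_commutator_of_commute [CommRing α] [Fintype l] [Fintype n]
    (A B : Matrix l l α) {X Y : Matrix n n α} (hXY : Commute X Y) :
    (A ⊗ₖ X) * (B ⊗ₖ Y) - (B ⊗ₖ Y) * (A ⊗ₖ X) = (A * B - B * A) ⊗ₖ (X * Y) := by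
  rw [← mul_kronecker_mul, ← mul_kronecker_mul, hXY.eq, sub_kronecker]

theorem Matrix.commute_one_kronecker [CommSemiring α] [Fintype l] [DecidableEq l] [Fintype n]
    {X Y : Matrix n n α} (hXY : Commute X Y) (B : Matrix l l α) :
    Commute (1 ⊗ₖ X) (B ⊗ₖ Y) := by
  rw [Commute, SemiconjBy, ← mul_kronecker_mul, ← mul_kronecker_mul, one_mul, mul_one, hXY.eq]

end Kronecker

theorem σz_mul_self : σz * σz = 1 := by
  simp [σz, one_fin_two]

/-- 𝔰𝔲_{𝔩0} = span{c⊗σz : c ∈ su(2^{n-1})} and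
𝔰𝔲_{𝔩1} = span{d⊗I, i·z_n : d ∈ su(2^{n-1})} satisfy: 𝔰𝔲_{𝔩1} is a subalgebra,
[𝔰𝔲_{𝔩0},𝔰𝔲_{𝔩1}] ⊆ 𝔰𝔲_{𝔩0} and [𝔰𝔲_{𝔩0},𝔰𝔲_{𝔩0}] ⊆ 𝔰𝔲_{𝔩1}.  Here n = m + 1. -/
theorem stmt12 (m : ℕ)
    (l0 l1 : Submodule ℝ (Matrix (Fin (2 ^ m) × Fin 2) (Fin (2 ^ m) × Fin 2) ℂ))
    (h0 : l0 = Submodule.span ℝ {M | ∃ c ∈ su (Fin (2 ^ m)), M = c ⊗ₖ σz})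
    (h1 : l1 = Submodule.span ℝ
      {M | (∃ d ∈ su (Fin (2 ^ m)), M = d ⊗ₖ (1 : Matrix (Fin 2) (Fin 2) ℂ)) ∨
           M = Complex.I • ((1 : Matrix (Fin (2 ^ m)) (Fin (2 ^ m)) ℂ) ⊗ₖ σz)}) :
    (∀ A ∈ l1, ∀ B ∈ l1, A * B - B * A ∈ l1) ∧
    (∀ A ∈ l0, ∀ B ∈ l1, A * B - B * A ∈ l0) ∧
    (∀ A ∈ l0, ∀ B ∈ l0, A * B - B * A ∈ l1) := by
  have hIz : Complex.I • ((1 : Matrix (Fin (2 ^ m)) (Fin (2 ^ m)) ℂ) ⊗ₖ σz) = 1 ⊗ₖ (I • σz) :=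
    (kronecker_smul _ _ _).symm
  have commute_mem {A B : Matrix (Fin (2 ^ m) × Fin 2) (Fin (2 ^ m) × Fin 2) ℂ}
      {p : Submodule ℝ _} (h : Commute A B) : A * B - B * A ∈ p := by
    rw [h.eq, sub_self]
    exact zero_mem p
  subst h0 h1
  refine ⟨fun A hA B hB => mul_sub_mul_mem_of_mem_span ?_ hA hB,
    fun A hA B hB => mul_sub_mul_mem_of_mem_span ?_ hA hB,
    fun A hA B hB => mul_sub_mul_mem_of_mem_span ?_ hA hB⟩
  · rintro _ (⟨c, hc, rfl⟩ | rfl) _ (⟨d, hd, rfl⟩ | rfl)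
    · rw [kronecker_commutator_of_commute _ _ (Commute.one_left 1), one_mul]
      exact Submodule.subset_span (Or.inl ⟨_, su.mul_sub_mul_mem hc hd, rfl⟩)
    · exact hIz ▸ commute_mem (commute_one_kronecker (Commute.one_right _) c).symm
    · exact hIz ▸ commute_mem (commute_one_kronecker (Commute.one_right _) d)
    · exact commute_mem (Commute.refl _)
  · rintro _ ⟨c, hc, rfl⟩ _ (⟨d, hd, rfl⟩ | rfl)
    · rw [kronecker_commutator_of_commute _ _ (Commute.one_right σz), mul_one]
      exact Submodule.subset_span ⟨_, su.mul_sub_mul_mem hc hd, rfl⟩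
    · exact hIz ▸ commute_mem (commute_one_kronecker ((Commute.refl σz).smul_left I) c).symm
  · rintro _ ⟨c, hc, rfl⟩ _ ⟨d, hd, rfl⟩
    rw [kronecker_commutator_of_commute _ _ (Commute.refl σz), σz_mul_self]
    exact Submodule.subset_span (Or.inl ⟨_, su.mul_sub_mul_mem hc hd, rfl⟩)
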